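/- Let $p \geq 1$, let $r \geq 1$, and let $b_1,\dots,b_p$ be integers with $b_i \geq 2$ and $r \mid b_i$ for every $i$. Set $a = \sum_{i=1}^p b_i$ and $B = \prod_{i=1}^p (b_i - 1)$. Let $D_1 = \frac{1}{r} \sum_{t=1}^{p} \frac{1}{t} \sum_{\tau \in S_p} \sum_{\substack{\mathbf{C} \\ r \mid \sum_{i=1}^{t} C_{\tau(i)}}} \sum_{i=1}^{t} b_{\tau(i)}$ and let $D_2 = p! \cdot \# \left\{ \mathbf{C} : r \mid \sum_{i=1}^{p} C_i \right\}$, where in both cases $\mathbf{C} = (C_1,\dots,C_p)$ ranges over integer tuples with $1 \leq C_i \leq b_i - 1$. Then $D_1 + D_2 = \frac{p!}{r^2} \left[ (a+1) B - (-1)^p \right] + p! \, (-1)^p$. -/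

import Mathlib

open Finset



variable {ι : Type*} [DecidableEq ι]

lemma swap1 {M : Type*} [AddCommMonoid M] (u : Finset ι) (s : ℕ) (h : ι → Finset ι → M) :
    ∑ S ∈ u.powersetCard (s+1), ∑ j ∈ S, h j (S.erase j)
      = ∑ j ∈ u, ∑ T ∈ (u.erase j).powersetCard s, h j T := by
  rw [Finset.sum_sigma', Finset.sum_sigma']
  refine Finset.sum_nbij' (fun x => ⟨x.2, x.1.erase x.2⟩) (fun y => ⟨insert y.1 y.2, y.1⟩)
    ?_ ?_ ?_ ?_ ?_
  · rintro ⟨S, j⟩ hx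
    simp only [Finset.mem_sigma, Finset.mem_powersetCard] at hx ⊢
    obtain ⟨⟨hSu, hcard⟩, hj⟩ := hx
    exact ⟨hSu hj, ⟨Finset.erase_subset_erase j hSu, by rw [Finset.card_erase_of_mem hj, hcard]; rfl⟩⟩
  · rintro ⟨j, T⟩ hy
    simp only [Finset.mem_sigma, Finset.mem_powersetCard] at hy ⊢
    obtain ⟨hj, hTu, hcard⟩ := hy
    have hjT : j ∉ T := fun hh => (Finset.notMem_erase j u) (hTu hh)
    refine ⟨⟨?_, ?_⟩, Finset.mem_insert_self _ _⟩
    · exact Finset.insert_subset hj ((hTu.trans (Finset.erase_subset _ _)))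
    · rw [Finset.card_insert_of_notMem hjT, hcard]
  · rintro ⟨S, j⟩ hx
    simp only [Finset.mem_sigma, Finset.mem_powersetCard] at hx
    simp [Finset.insert_erase hx.2]
  · rintro ⟨j, T⟩ hy
    simp only [Finset.mem_sigma, Finset.mem_powersetCard] at hy
    have hjT : j ∉ T := fun hh => (Finset.notMem_erase j u) (hy.2.1 hh)
    simp [Finset.erase_insert hjT]
  · rintro ⟨S, j⟩ hx
    rfl

lemma swap2 {M : Type*} [AddCommMonoid M] (u : Finset ι) (s : ℕ) (k : ι → Finset ι → M) :
    ∑ j ∈ u, ∑ T ∈ (u.erase j).powersetCard s, k j T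
      = ∑ T ∈ u.powersetCard s, ∑ j ∈ u \ T, k j T := by
  rw [Finset.sum_sigma', Finset.sum_sigma']
  refine Finset.sum_nbij' (fun x => ⟨x.2, x.1⟩) (fun y => ⟨y.2, y.1⟩) ?_ ?_ ?_ ?_ ?_
  · rintro ⟨j, T⟩ hx
    simp only [Finset.mem_sigma, Finset.mem_powersetCard, Finset.mem_sdiff] at hx ⊢
    obtain ⟨hj, hTu, hcard⟩ := hx
    exact ⟨⟨hTu.trans (Finset.erase_subset _ _), hcard⟩, hj,
      fun hh => (Finset.notMem_erase j u) (hTu hh)⟩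
  · rintro ⟨T, j⟩ hy
    simp only [Finset.mem_sigma, Finset.mem_powersetCard, Finset.mem_sdiff] at hy ⊢
    obtain ⟨⟨hTu, hcard⟩, hj, hjT⟩ := hy
    exact ⟨hj, Finset.subset_erase.2 ⟨hTu, hjT⟩, hcard⟩
  · rintro ⟨j, T⟩ _; rfl
  · rintro ⟨T, j⟩ _; rfl
  · rintro ⟨j, T⟩ _; rfl



lemma countc0 (r m : ℕ) (hr : 1 ≤ r) : ∀ N : ℕ,
    (((Finset.Icc 1 N).filter (fun c => r ∣ m + c)).card) + m / r = (m + N) / r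
  | 0 => by simp
  | (N+1) => by
    have h1 : Finset.Icc 1 (N+1) = insert (N+1) (Finset.Icc 1 N) := by
      exact (Finset.insert_Icc_right_eq_Icc_add_one (by omega)).symm
    rw [h1, Finset.filter_insert]
    by_cases hd : r ∣ m + (N + 1)
    · rw [if_pos hd, Finset.card_insert_of_notMem (by simp)]
      have := countc0 r m hr N
      have h2 : (m + (N+1)) / r = (m + N) / r + 1 :=
        Nat.succ_div_of_dvd hd
      omega
    · rw [if_neg hd]
      have := countc0 r m hr N
      have h2 : (m + (N+1)) / r = (m + N) / r := by
        rw [show m + (N+1) = (m + N) + 1 from rfl, Nat.succ_div, if_neg (show ¬ r ∣ m + N + 1 from hd), add_zero]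
      omega

lemma countc (r m bj : ℕ) (hr : 1 ≤ r) (hrb : r ∣ bj) (hbj : 1 ≤ bj) :
    (((Finset.Icc 1 (bj - 1)).filter (fun c => r ∣ m + c)).card)
      + (if r ∣ m then 1 else 0) = bj / r := by
  have h0 := countc0 r m hr (bj - 1)
  have h1 : (m + bj) / r = m / r + bj / r := by
    obtain ⟨k, rfl⟩ := hrb
    rw [Nat.add_mul_div_left _ _ hr, Nat.mul_div_cancel_left _ hr]
  have h2 : (m + bj) / r = (m + (bj - 1)) / r + (if r ∣ m then 1 else 0) := by
    have h3 : m + bj = (m + (bj - 1)) + 1 := by omega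
    rw [h3, Nat.succ_div]
    congr 1
    have : (r ∣ m + (bj - 1) + 1) ↔ (r ∣ m) := by
      rw [← h3, add_comm m bj, Nat.dvd_add_right hrb]
    simp [this]
  omega



lemma count_main {p r : ℕ} (hr : 1 ≤ r) (b : Fin p → ℕ) (hb : ∀ i, 2 ≤ b i)
    (hrb : ∀ i, r ∣ b i) (S : Finset (Fin p)) :
    ∀ (n : Fin p → Finset ℕ) (m : ℕ), (∀ i ∈ S, n i = Finset.Icc 1 (b i - 1)) →
      (r : ℚ) * (((Fintype.piFinset n).filter
          (fun C : Fin p → ℕ => r ∣ m + ∑ i ∈ S, C i)).card : ℚ)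
        = (∏ i ∈ Sᶜ, ((n i).card : ℚ)) *
            ((∏ i ∈ S, ((b i : ℚ) - 1)) - (-1) ^ S.card
              + (r : ℚ) * (-1) ^ S.card * (if r ∣ m then 1 else 0)) := by
  induction S using Finset.induction_on with
  | empty =>
    intro n m _
    simp only [Finset.sum_empty, add_zero, Finset.card_empty, pow_zero, Finset.prod_empty,
      Finset.compl_empty]
    rw [Finset.filter_const]
    by_cases hd : r ∣ m
    · rw [if_pos hd, if_pos hd, Fintype.card_piFinset]
      push_cast
      ring
    · rw [if_neg hd, if_neg hd]
      simp
  | @insert j S₀ hj ih =>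
    intro n m hnS
    have hnj : n j = Finset.Icc 1 (b j - 1) := hnS j (Finset.mem_insert_self _ _)
    have hbj2 := hb j
    have hbj1 : 1 ≤ b j := by omega
    have hdec : (((Fintype.piFinset n).filter
          (fun C : Fin p → ℕ => r ∣ m + ∑ i ∈ insert j S₀, C i)).card : ℕ)
        = ∑ c ∈ n j, ((Fintype.piFinset (Function.update n j {c})).filter
            (fun C : Fin p → ℕ => r ∣ (m + c) + ∑ i ∈ S₀, C i)).card := by
      rw [Finset.card_eq_sum_card_fiberwise
        (f := fun C : Fin p → ℕ => C j) (t := n j)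
        (fun C hC => by
          simp only [Finset.mem_coe, Finset.mem_filter, Fintype.mem_piFinset] at hC
          exact hC.1 j)]
      refine Finset.sum_congr rfl (fun c hc => ?_)
      congr 1
      ext C
      simp only [Finset.mem_filter, Fintype.mem_piFinset, Finset.sum_insert hj]
      constructor
      · rintro ⟨⟨hCpi, hdvd⟩, hCj⟩
        refine ⟨fun i => ?_, ?_⟩
        · by_cases hij : i = j
          · subst hij; simp [Function.update_self, hCj]
          · simpa [Function.update_of_ne hij] using hCpi i
        · rw [show m + c + ∑ i ∈ S₀, C i = m + (C j + ∑ i ∈ S₀, C i) by rw [hCj]; ring]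
          exact hdvd
      · rintro ⟨hCpi, hdvd⟩
        have hCj : C j = c := by
          have := hCpi j
          simpa [Function.update_self] using this
        refine ⟨⟨fun i => ?_, ?_⟩, hCj⟩
        · by_cases hij : i = j
          · subst hij; rw [hCj, hnj]
            rw [hnj] at hc
            exact hc
          · have := hCpi i
            rwa [Function.update_of_ne hij] at this
        · rw [show m + (C j + ∑ i ∈ S₀, C i) = m + c + ∑ i ∈ S₀, C i by rw [hCj]; ring]
          exact hdvd
    set K : ℚ := ∏ i ∈ (insert j S₀)ᶜ, ((n i).card : ℚ) with hKdef
    have hK : ∀ c : ℕ, (∏ i ∈ S₀ᶜ, ((Function.update n j {c} i).card : ℚ)) = K := by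
      intro c
      have hjc : j ∈ S₀ᶜ := Finset.mem_compl.2 hj
      rw [hKdef, Finset.compl_insert, ← Finset.mul_prod_erase _ _ hjc,
        Function.update_self, Finset.card_singleton, Nat.cast_one, one_mul]
      exact Finset.prod_congr rfl (fun i hi => by
        rw [Function.update_of_ne (Finset.ne_of_mem_erase hi)])
    have hterm : ∀ c ∈ n j, (r : ℚ) * (((Fintype.piFinset (Function.update n j {c})).filter
            (fun C : Fin p → ℕ => r ∣ (m + c) + ∑ i ∈ S₀, C i)).card : ℚ)
        = K * ((∏ i ∈ S₀, ((b i : ℚ) - 1)) - (-1) ^ S₀.card)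
          + K * ((r : ℚ) * (-1) ^ S₀.card) * (if r ∣ m + c then (1:ℚ) else 0) := by
      intro c hc
      rw [ih (Function.update n j {c}) (m + c) (fun i hi => by
        rw [Function.update_of_ne (fun h => hj (by rw [← h]; exact hi))]
        exact hnS i (Finset.mem_insert_of_mem hi)), hK]
      ring
    have hcnt : ∑ c ∈ n j, (if r ∣ m + c then (1:ℚ) else 0)
        = ((b j / r : ℕ) : ℚ) - (if r ∣ m then (1:ℚ) else 0) := by
      rw [Finset.sum_boole, hnj]
      have h := countc r m (b j) hr (hrb j) hbj1
      set cN := ((Finset.Icc 1 (b j - 1)).filter (fun c => r ∣ m + c)).card with hcN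
      have h1 : 1 ≤ b j / r := (Nat.one_le_div_iff hr).2 (Nat.le_of_dvd hbj1 (hrb j))
      by_cases hd : r ∣ m
      · rw [if_pos hd] at h ⊢
        have h2 : cN = b j / r - 1 := by clear hdec ih hK hterm; omega
        rw [h2, Nat.cast_sub h1]
        push_cast
        ring
      · rw [if_neg hd] at h ⊢
        have h2 : cN = b j / r := by clear hdec ih hK hterm; omega
        rw [h2]
        ring
    have hdiv : (r : ℚ) * ((b j / r : ℕ) : ℚ) = (b j : ℚ) := by
      obtain ⟨k, hk⟩ := hrb j
      rw [hk, Nat.mul_div_cancel_left _ hr]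
      push_cast
      ring
    have hcard : ((n j).card : ℚ) = (b j : ℚ) - 1 := by
      rw [hnj, Nat.card_Icc]
      have h3 : b j - 1 + 1 - 1 = b j - 1 := by clear hdec ih hK hterm hcnt; omega
      rw [h3, Nat.cast_sub hbj1]
      push_cast
      ring
    rw [hdec]
    push_cast [Finset.mul_sum]
    rw [Finset.sum_congr rfl hterm, Finset.sum_add_distrib, Finset.sum_const,
      ← Finset.mul_sum, hcnt, Finset.prod_insert hj, Finset.card_insert_of_notMem hj,
      nsmul_eq_mul, hcard, pow_succ]
    set iQ : ℚ := (if r ∣ m then (1:ℚ) else 0)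
    set T₀ : ℚ := ∏ i ∈ S₀, ((b i : ℚ) - 1)
    set ε : ℚ := (-1 : ℚ) ^ S₀.card
    linear_combination (K * ε) * hdiv



section permcount

variable {p : ℕ}

noncomputable def toPerm (D S : Finset (Fin p))
    (e : {x : Fin p // x ∈ D} ≃ {x : Fin p // x ∈ S})
    (f : {x : Fin p // x ∉ D} ≃ {x : Fin p // x ∉ S}) : Equiv.Perm (Fin p) :=
  (Equiv.sumCompl (· ∈ D)).symm.trans ((e.sumCongr f).trans (Equiv.sumCompl (· ∈ S)))

lemma toPerm_mem {D S : Finset (Fin p)} (e) (f) {x : Fin p} (hx : x ∈ D) :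
    toPerm D S e f x = (e ⟨x, hx⟩ : Fin p) := by
  simp [toPerm, Equiv.sumCompl_symm_apply_of_pos hx]

lemma toPerm_not_mem {D S : Finset (Fin p)} (e) (f) {x : Fin p} (hx : x ∉ D) :
    toPerm D S e f x = (f ⟨x, hx⟩ : Fin p) := by
  simp [toPerm, Equiv.sumCompl_symm_apply_of_neg hx]

lemma toPerm_image (D S : Finset (Fin p)) (e) (f) :
    D.image (toPerm D S e f) = S := by
  ext y
  simp only [Finset.mem_image]
  constructor
  · rintro ⟨x, hx, rfl⟩
    rw [toPerm_mem e f hx]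
    exact (e ⟨x, hx⟩).2
  · intro hy
    refine ⟨e.symm ⟨y, hy⟩, (e.symm ⟨y, hy⟩).2, ?_⟩
    rw [toPerm_mem e f (e.symm ⟨y, hy⟩).2]
    simp

lemma perm_count (D S : Finset (Fin p)) {t : ℕ} (hD : D.card = t) (hS : S.card = t) :
    (Finset.univ.filter (fun τ : Equiv.Perm (Fin p) => D.image τ = S)).card
      = t.factorial * (p - t).factorial := by
  have hbij : Function.Bijective
      (fun ef : ({x : Fin p // x ∈ D} ≃ {x : Fin p // x ∈ S}) ×
          ({x : Fin p // x ∉ D} ≃ {x : Fin p // x ∉ S}) =>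
        (⟨toPerm D S ef.1 ef.2, toPerm_image D S ef.1 ef.2⟩ :
          {τ : Equiv.Perm (Fin p) // D.image τ = S})) := by
    constructor
    · rintro ⟨e, f⟩ ⟨e', f'⟩ h
      have h' : toPerm D S e f = toPerm D S e' f' := congrArg Subtype.val h
      refine Prod.ext ?_ ?_
      · ext x
        have h2 : toPerm D S e f x.1 = toPerm D S e' f' x.1 := by rw [h']
        rw [toPerm_mem e f x.2, toPerm_mem e' f' x.2] at h2
        simpa using congrArg Fin.val h2
      · ext x
        have h2 : toPerm D S e f x.1 = toPerm D S e' f' x.1 := by rw [h']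
        rw [toPerm_not_mem e f x.2, toPerm_not_mem e' f' x.2] at h2
        simpa using congrArg Fin.val h2
    · rintro ⟨τ, hτ⟩
      have hmem : ∀ x : Fin p, x ∈ D → τ x ∈ S := fun x hx => by
        rw [← hτ]; exact Finset.mem_image_of_mem τ hx
      have hmem' : ∀ x : Fin p, x ∉ D → τ x ∉ S := by
        intro x hx hc
        rw [← hτ] at hc
        obtain ⟨y, hy, hyx⟩ := Finset.mem_image.1 hc
        exact hx (by rwa [τ.injective hyx] at hy)
      have hmemS : ∀ y : Fin p, y ∈ S → τ.symm y ∈ D := by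
        intro y hy
        rw [← hτ] at hy
        obtain ⟨x, hx, rfl⟩ := Finset.mem_image.1 hy
        rwa [Equiv.symm_apply_apply]
      have hmemS' : ∀ y : Fin p, y ∉ S → τ.symm y ∉ D := by
        intro y hy hc
        exact hy (by simpa using hmem _ hc)
      refine ⟨⟨⟨fun x => ⟨τ x, hmem x x.2⟩, fun y => ⟨τ.symm y, hmemS y y.2⟩,
        fun x => Subtype.ext (τ.symm_apply_apply x), fun y => Subtype.ext (τ.apply_symm_apply y)⟩,
        ⟨fun x => ⟨τ x, hmem' x x.2⟩, fun y => ⟨τ.symm y, hmemS' y y.2⟩,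
        fun x => Subtype.ext (τ.symm_apply_apply x), fun y => Subtype.ext (τ.apply_symm_apply y)⟩⟩,
        ?_⟩
      apply Subtype.ext
      apply Equiv.ext
      intro x
      by_cases hx : x ∈ D
      · exact toPerm_mem _ _ hx
      · exact toPerm_not_mem _ _ hx
  have hcard := Fintype.card_of_bijective hbij
  rw [Fintype.card_prod] at hcard
  have h1 : Fintype.card {x : Fin p // x ∈ D} = t := by
    rw [Fintype.card_coe, hD]
  have h2 : Fintype.card {x : Fin p // x ∈ S} = t := by
    rw [Fintype.card_coe, hS]
  have h3 : Fintype.card {x : Fin p // x ∉ D} = p - t := by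
    rw [Fintype.card_subtype_compl, Fintype.card_fin, Fintype.card_coe, hD]
  have h4 : Fintype.card {x : Fin p // x ∉ S} = p - t := by
    rw [Fintype.card_subtype_compl, Fintype.card_fin, Fintype.card_coe, hS]
  rw [Fintype.card_equiv (Fintype.equivOfCardEq (h1.trans h2.symm)), h1,
    Fintype.card_equiv (Fintype.equivOfCardEq (h3.trans h4.symm)), h3] at hcard
  rw [← Fintype.card_subtype, ← hcard]



lemma card_Dt {p t : ℕ} (ht : t ≤ p) :
    (Finset.univ.filter (fun i : Fin p => (i : ℕ) < t)).card = t := by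
  apply Finset.card_eq_of_bijective (fun i hi => ⟨i, lt_of_lt_of_le hi ht⟩)
  · intro a ha
    simp only [Finset.mem_filter, Finset.mem_univ, true_and] at ha
    exact ⟨a.1, ha, by simp⟩
  · intro i hi
    simp [hi]
  · intro i j hi hj hij
    simpa using congrArg Fin.val hij

lemma bsum_id {p t : ℕ} (ht1 : 1 ≤ t) (c : Fin p → ℚ) :
    ∑ S ∈ (Finset.univ : Finset (Fin p)).powersetCard t, ∑ j ∈ S, c j
      = ((p-1).choose (t-1) : ℚ) * ∑ j, c j := by
  obtain ⟨s, rfl⟩ : ∃ s, t = s + 1 := ⟨t - 1, by omega⟩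
  have h1 : (∑ S ∈ (Finset.univ : Finset (Fin p)).powersetCard (s+1), ∑ j ∈ S, c j)
      = ∑ j : Fin p, ∑ T ∈ ((Finset.univ : Finset (Fin p)).erase j).powersetCard s, c j :=
    swap1 Finset.univ s (fun j _ => c j)
  rw [h1]
  simp only [Finset.sum_const, Finset.card_powersetCard, Finset.card_erase_of_mem
    (Finset.mem_univ _), Finset.card_univ, Fintype.card_fin]
  rw [Finset.mul_sum]
  refine Finset.sum_congr rfl (fun j _ => ?_)
  simp only [Nat.add_sub_cancel]
  rw [nsmul_eq_mul, mul_comm]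

lemma telescope_id {p : ℕ} (b : Fin p → ℕ) :
    ∑ t ∈ Finset.Icc 1 p, ((t-1).factorial : ℚ) * ((p-t).factorial : ℚ) * (-1)^t *
      (∑ S ∈ (Finset.univ : Finset (Fin p)).powersetCard t,
        (∑ j ∈ S, (b j : ℚ)) * ∏ i ∈ Sᶜ, ((b i : ℚ) - 1))
    = (p.factorial : ℚ) * ((-1)^p - ∏ i, ((b i : ℚ) - 1)) := by
  set x : Fin p → ℚ := fun i => (b i : ℚ) - 1 with hx
  set H : ℕ → ℚ := fun s => ∑ T ∈ (Finset.univ : Finset (Fin p)).powersetCard s,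
    ∏ i ∈ Tᶜ, x i with hH
  have hG : ∀ s : ℕ, s < p →
      (∑ S ∈ (Finset.univ : Finset (Fin p)).powersetCard (s+1),
        (∑ j ∈ S, (b j : ℚ)) * ∏ i ∈ Sᶜ, x i)
      = ((p - s : ℕ) : ℚ) * H s + ((s+1 : ℕ) : ℚ) * H (s+1) := by
    intro s hs
    have step1 : (∑ S ∈ (Finset.univ : Finset (Fin p)).powersetCard (s+1),
        (∑ j ∈ S, (b j : ℚ)) * ∏ i ∈ Sᶜ, x i)
        = ∑ S ∈ (Finset.univ : Finset (Fin p)).powersetCard (s+1), ∑ j ∈ S,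
            (fun (j : Fin p) (T : Finset (Fin p)) => (b j : ℚ) * ∏ i ∈ (insert j T)ᶜ, x i)
              j (S.erase j) := by
      refine Finset.sum_congr rfl (fun S hS => ?_)
      rw [Finset.sum_mul]
      refine Finset.sum_congr rfl (fun j hj => ?_)
      simp only
      rw [Finset.insert_erase hj]
    have hsw := swap1 (Finset.univ : Finset (Fin p)) s
      (fun (j : Fin p) (T : Finset (Fin p)) => (b j : ℚ) * ∏ i ∈ (insert j T)ᶜ, x i)
    rw [step1, hsw]
    have step2 : ∀ j : Fin p, ∀ T ∈ ((Finset.univ : Finset (Fin p)).erase j).powersetCard s,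
        (b j : ℚ) * ∏ i ∈ (insert j T)ᶜ, x i
          = x j * ∏ i ∈ (insert j T)ᶜ, x i + ∏ i ∈ (insert j T)ᶜ, x i := by
      intro j T _
      rw [hx]
      ring
    rw [Finset.sum_congr rfl (fun j _ => Finset.sum_congr rfl (step2 j))]
    rw [Finset.sum_congr rfl (fun j (_ : j ∈ Finset.univ) => Finset.sum_add_distrib),
      Finset.sum_add_distrib]
    congr 1
    · -- first piece : (p-s) * H s
      have hsw2 : (∑ j : Fin p, ∑ T ∈ ((Finset.univ : Finset (Fin p)).erase j).powersetCard s,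
            x j * ∏ i ∈ (insert j T)ᶜ, x i)
          = ∑ T ∈ (Finset.univ : Finset (Fin p)).powersetCard s, ∑ j ∈ Finset.univ \ T,
            x j * ∏ i ∈ (insert j T)ᶜ, x i :=
        swap2 Finset.univ s (fun j T => x j * ∏ i ∈ (insert j T)ᶜ, x i)
      rw [hsw2]
      rw [hH]
      simp only
      rw [Finset.mul_sum]
      refine Finset.sum_congr rfl (fun T hT => ?_)
      simp only [Finset.mem_powersetCard] at hT
      have hcard : (Finset.univ \ T).card = p - s := by
        rw [Finset.card_sdiff_of_subset hT.1, Finset.card_univ, Fintype.card_fin, hT.2]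
      have hinner : ∀ j ∈ Finset.univ \ T,
          x j * ∏ i ∈ (insert j T)ᶜ, x i = ∏ i ∈ Tᶜ, x i := by
        intro j hj
        have hjT : j ∈ Tᶜ := by
          simp only [Finset.mem_sdiff] at hj
          exact Finset.mem_compl.2 hj.2
        rw [Finset.compl_insert, Finset.mul_prod_erase _ _ hjT]
      rw [Finset.sum_congr rfl hinner, Finset.sum_const, hcard, nsmul_eq_mul]
    · -- second piece : (s+1) * H (s+1)
      have hsw3 : (∑ S ∈ (Finset.univ : Finset (Fin p)).powersetCard (s+1), ∑ j ∈ S,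
            ∏ i ∈ (insert j (S.erase j))ᶜ, x i)
          = ∑ j : Fin p, ∑ T ∈ ((Finset.univ : Finset (Fin p)).erase j).powersetCard s,
            ∏ i ∈ (insert j T)ᶜ, x i :=
        swap1 Finset.univ s (fun j T => ∏ i ∈ (insert j T)ᶜ, x i)
      rw [← hsw3]
      rw [hH]
      simp only
      rw [Finset.mul_sum]
      refine Finset.sum_congr rfl (fun S hS => ?_)
      simp only [Finset.mem_powersetCard] at hS
      have hinner : ∀ j ∈ S, ∏ i ∈ (insert j (S.erase j))ᶜ, x i = ∏ i ∈ Sᶜ, x i := by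
        intro j hj
        rw [Finset.insert_erase hj]
      rw [Finset.sum_congr rfl hinner, Finset.sum_const, hS.2, nsmul_eq_mul]
  -- reindex Icc 1 p to range p
  have hreindex : ∑ t ∈ Finset.Icc 1 p, ((t-1).factorial : ℚ) * ((p-t).factorial : ℚ) * (-1)^t *
      (∑ S ∈ (Finset.univ : Finset (Fin p)).powersetCard t,
        (∑ j ∈ S, (b j : ℚ)) * ∏ i ∈ Sᶜ, x i)
      = ∑ s ∈ Finset.range p, ((s).factorial : ℚ) * ((p-(s+1)).factorial : ℚ) * (-1)^(s+1) *
      (∑ S ∈ (Finset.univ : Finset (Fin p)).powersetCard (s+1),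
        (∑ j ∈ S, (b j : ℚ)) * ∏ i ∈ Sᶜ, x i) := by
    refine Finset.sum_nbij' (fun t => t - 1) (fun s => s + 1) ?_ ?_ ?_ ?_ ?_
    · intro t ht; simp only [Finset.mem_Icc] at ht; simp only [Finset.mem_range]; omega
    · intro s hs; simp only [Finset.mem_range] at hs; simp only [Finset.mem_Icc]; omega
    · intro t ht; simp only [Finset.mem_Icc] at ht; show t - 1 + 1 = t; omega
    · intro s hs; simp only [Finset.mem_range] at hs; show s + 1 - 1 = s; omega
    · intro t ht
      simp only [Finset.mem_Icc] at ht
      have h1 : t - 1 + 1 = t := by omega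
      rw [h1]
  rw [hreindex]
  set v : ℕ → ℚ := fun s => (-1)^s * (s.factorial : ℚ) * ((p-s).factorial : ℚ) * H s with hv
  have hterm : ∀ s ∈ Finset.range p,
      ((s).factorial : ℚ) * ((p-(s+1)).factorial : ℚ) * (-1)^(s+1) *
      (∑ S ∈ (Finset.univ : Finset (Fin p)).powersetCard (s+1),
        (∑ j ∈ S, (b j : ℚ)) * ∏ i ∈ Sᶜ, x i) = v (s+1) - v s := by
    intro s hs
    simp only [Finset.mem_range] at hs
    rw [hG s hs, hv]
    simp only
    have e1 : ((s+1).factorial : ℚ) = ((s+1 : ℕ) : ℚ) * (s.factorial : ℚ) := by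
      rw [Nat.factorial_succ]; push_cast; ring
    have e2 : ((p-s).factorial : ℚ) = ((p - s : ℕ) : ℚ) * ((p - (s+1)).factorial : ℚ) := by
      have h3 : p - s = (p - (s+1)) + 1 := by omega
      rw [h3, Nat.factorial_succ]
      push_cast
      ring
    rw [e1, e2, pow_succ]
    ring
  rw [Finset.sum_congr rfl hterm, Finset.sum_range_sub v p]
  have hHp : H p = 1 := by
    rw [hH]
    simp only
    have h := Finset.powersetCard_self (Finset.univ : Finset (Fin p))
    rw [Finset.card_univ, Fintype.card_fin] at h
    rw [h, Finset.sum_singleton, Finset.compl_univ, Finset.prod_empty]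
  have hH0 : H 0 = ∏ i, x i := by
    rw [hH]
    simp only
    rw [Finset.powersetCard_zero, Finset.sum_singleton, Finset.compl_empty]
  rw [hv]
  simp only
  rw [hHp, hH0, Nat.sub_self, Nat.sub_zero, Nat.factorial_zero]
  push_cast
  ring

/-- `D₁ + D₂ = (p!/r²)[(a+1)B - (-1)^p] + p!(-1)^p`, where
`D₁ = (1/r) ∑_{t=1}^p (1/t) ∑_{τ ∈ S_p} ∑_{C, r ∣ ∑_{i≤t} C_{τ(i)}} ∑_{i=1}^t b_{τ(i)}`
and `D₂ = p! · #{C : r ∣ ∑ᵢ Cᵢ}`, `C` ranging over tuples with `1 ≤ Cᵢ ≤ bᵢ - 1`. -/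
theorem stmt_10 (p r : ℕ) (hp : 1 ≤ p) (hr : 1 ≤ r) (b : Fin p → ℕ)
    (hb : ∀ i, 2 ≤ b i) (hrb : ∀ i, r ∣ b i) :
    (1 / (r : ℚ)) *
      (∑ t ∈ Finset.Icc 1 p, (1 / (t : ℚ)) *
        ∑ τ : Equiv.Perm (Fin p),
          ∑ C ∈ (Fintype.piFinset (fun i => Finset.Icc 1 (b i - 1))).filter
              (fun C : Fin p → ℕ =>
                r ∣ ∑ i ∈ Finset.univ.filter (fun i : Fin p => (i : ℕ) < t), C (τ i)),
            ∑ i ∈ Finset.univ.filter (fun i : Fin p => (i : ℕ) < t), (b (τ i) : ℚ)) +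
    (Nat.factorial p : ℚ) *
      (((Fintype.piFinset (fun i => Finset.Icc 1 (b i - 1))).filter
          (fun C : Fin p → ℕ => r ∣ ∑ i, C i)).card : ℚ)
    = (Nat.factorial p : ℚ) / (r : ℚ) ^ 2 *
        (((∑ i, (b i : ℚ)) + 1) * (∏ i, ((b i : ℚ) - 1)) - (-1) ^ p) +
      (Nat.factorial p : ℚ) * (-1) ^ p := by
  classical
  have hr0 : (r : ℚ) ≠ 0 := Nat.cast_ne_zero.2 (by omega)
  set pf := Fintype.piFinset (fun i => Finset.Icc 1 (b i - 1)) with hpf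
  -- counting with the divisibility condition on a subset S
  have hNQ : ∀ (t : ℕ), ∀ S ∈ (Finset.univ : Finset (Fin p)).powersetCard t,
      (r : ℚ) * ((pf.filter (fun C : Fin p → ℕ => r ∣ ∑ j ∈ S, C j)).card : ℚ)
      = (∏ i, ((b i : ℚ) - 1)) + ((r : ℚ) - 1) * (-1) ^ t * ∏ i ∈ Sᶜ, ((b i : ℚ) - 1) := by
    intro t S hS
    rw [Finset.mem_powersetCard] at hS
    have h := count_main hr b hb hrb S (fun i => Finset.Icc 1 (b i - 1)) 0 (fun i _ => rfl)
    simp only [zero_add, if_pos (dvd_zero r)] at h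
    rw [hpf, h, hS.2]
    have hprodc : (∏ i ∈ Sᶜ, (((Finset.Icc 1 (b i - 1)).card : ℚ)))
        = ∏ i ∈ Sᶜ, ((b i : ℚ) - 1) := by
      refine Finset.prod_congr rfl (fun i _ => ?_)
      rw [Nat.card_Icc]
      have h3 : b i - 1 + 1 - 1 = b i - 1 := by omega
      rw [h3, Nat.cast_sub (show 1 ≤ b i from by have := hb i; omega), Nat.cast_one]
    rw [hprodc]
    have hX := Finset.prod_mul_prod_compl S (fun i => ((b i : ℚ) - 1))
    linear_combination hX
  -- the D₂ count
  have hD2 : (r : ℚ) * ((pf.filter (fun C : Fin p → ℕ => r ∣ ∑ i, C i)).card : ℚ)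
      = (∏ i, ((b i : ℚ) - 1)) - (-1) ^ p + (r : ℚ) * (-1) ^ p := by
    have h := count_main hr b hb hrb Finset.univ (fun i => Finset.Icc 1 (b i - 1)) 0
      (fun i _ => rfl)
    simp only [zero_add, if_pos (dvd_zero r), Finset.compl_univ, Finset.prod_empty, one_mul,
      Finset.card_univ, Fintype.card_fin, mul_one] at h
    rw [hpf]
    exact h
  -- grouping permutations by the image of {i < t}
  have hτsum : ∀ t ∈ Finset.Icc 1 p,
      (∑ τ : Equiv.Perm (Fin p),
        ∑ C ∈ pf.filter (fun C : Fin p → ℕ =>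
            r ∣ ∑ i ∈ Finset.univ.filter (fun i : Fin p => (i : ℕ) < t), C (τ i)),
          ∑ i ∈ Finset.univ.filter (fun i : Fin p => (i : ℕ) < t), (b (τ i) : ℚ))
      = ((t.factorial * (p - t).factorial : ℕ) : ℚ) *
        ∑ S ∈ (Finset.univ : Finset (Fin p)).powersetCard t,
          ((pf.filter (fun C : Fin p → ℕ => r ∣ ∑ j ∈ S, C j)).card : ℚ) *
            (∑ j ∈ S, (b j : ℚ)) := by
    intro t ht
    rw [Finset.mem_Icc] at ht
    set D := Finset.univ.filter (fun i : Fin p => (i : ℕ) < t) with hD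
    have hDcard : D.card = t := card_Dt ht.2
    set F : Finset (Fin p) → ℚ := fun S =>
      ((pf.filter (fun C : Fin p → ℕ => r ∣ ∑ j ∈ S, C j)).card : ℚ) *
        (∑ j ∈ S, (b j : ℚ)) with hF
    have hper : ∀ τ : Equiv.Perm (Fin p),
        (∑ C ∈ pf.filter (fun C : Fin p → ℕ => r ∣ ∑ i ∈ D, C (τ i)),
          ∑ i ∈ D, (b (τ i) : ℚ)) = F (D.image τ) := by
      intro τ
      have hinj : ∀ x ∈ D, ∀ y ∈ D, τ x = τ y → x = y := fun x _ y _ h => τ.injective h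
      have hfilt : pf.filter (fun C : Fin p → ℕ => r ∣ ∑ i ∈ D, C (τ i))
          = pf.filter (fun C : Fin p → ℕ => r ∣ ∑ j ∈ D.image τ, C j) := by
        refine Finset.filter_congr (fun C _ => ?_)
        rw [Finset.sum_image hinj]
      rw [hfilt, Finset.sum_const, hF]
      simp only
      rw [Finset.sum_image hinj, nsmul_eq_mul]
    rw [Finset.sum_congr rfl (fun τ _ => hper τ)]
    have hmaps : ∀ τ ∈ (Finset.univ : Finset (Equiv.Perm (Fin p))),
        D.image τ ∈ (Finset.univ : Finset (Fin p)).powersetCard t := by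
      intro τ _
      rw [Finset.mem_powersetCard]
      exact ⟨Finset.subset_univ _,
        by rw [Finset.card_image_of_injective _ τ.injective, hDcard]⟩
    rw [← Finset.sum_fiberwise_of_maps_to hmaps (fun τ => F (D.image τ))]
    rw [Finset.mul_sum]
    refine Finset.sum_congr rfl (fun S hS => ?_)
    rw [Finset.mem_powersetCard] at hS
    have hc : ∀ τ ∈ Finset.univ.filter (fun τ : Equiv.Perm (Fin p) => D.image τ = S),
        F (D.image τ) = F S := by
      intro τ hτ
      rw [Finset.mem_filter] at hτ
      rw [hτ.2]
    rw [Finset.sum_congr rfl hc, Finset.sum_const, perm_count D S hDcard hS.2, nsmul_eq_mul]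
  -- rewrite the τ-sums
  rw [Finset.sum_congr rfl (fun t ht => by rw [hτsum t ht] :
    ∀ t ∈ Finset.Icc 1 p, (1 / (t : ℚ)) *
      (∑ τ : Equiv.Perm (Fin p),
        ∑ C ∈ pf.filter (fun C : Fin p → ℕ =>
            r ∣ ∑ i ∈ Finset.univ.filter (fun i : Fin p => (i : ℕ) < t), C (τ i)),
          ∑ i ∈ Finset.univ.filter (fun i : Fin p => (i : ℕ) < t), (b (τ i) : ℚ))
      = (1 / (t : ℚ)) * (((t.factorial * (p - t).factorial : ℕ) : ℚ) *
        ∑ S ∈ (Finset.univ : Finset (Fin p)).powersetCard t,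
          ((pf.filter (fun C : Fin p → ℕ => r ∣ ∑ j ∈ S, C j)).card : ℚ) *
            (∑ j ∈ S, (b j : ℚ))))]
  -- per-t closed form
  have hstep : ∀ t ∈ Finset.Icc 1 p,
      (1 / (t : ℚ)) * (((t.factorial * (p - t).factorial : ℕ) : ℚ) *
        ∑ S ∈ (Finset.univ : Finset (Fin p)).powersetCard t,
          ((pf.filter (fun C : Fin p → ℕ => r ∣ ∑ j ∈ S, C j)).card : ℚ) *
            (∑ j ∈ S, (b j : ℚ)))
      = (1 / (r : ℚ)) * ((((p-1).factorial : ℚ)) *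
            ((∏ i, ((b i : ℚ) - 1)) * ∑ i, (b i : ℚ))
          + ((r : ℚ) - 1) * (((t-1).factorial : ℚ) * ((p-t).factorial : ℚ) * (-1) ^ t *
              ∑ S ∈ (Finset.univ : Finset (Fin p)).powersetCard t,
                (∑ j ∈ S, (b j : ℚ)) * ∏ i ∈ Sᶜ, ((b i : ℚ) - 1))) := by
    intro t ht
    rw [Finset.mem_Icc] at ht
    have ht0 : (t : ℚ) ≠ 0 := Nat.cast_ne_zero.2 (by omega)
    have hAt : (r : ℚ) * (∑ S ∈ (Finset.univ : Finset (Fin p)).powersetCard t,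
          ((pf.filter (fun C : Fin p → ℕ => r ∣ ∑ j ∈ S, C j)).card : ℚ) *
            (∑ j ∈ S, (b j : ℚ)))
        = (∏ i, ((b i : ℚ) - 1)) * ((((p-1).choose (t-1) : ℕ) : ℚ) * ∑ i, (b i : ℚ))
          + ((r : ℚ) - 1) * (-1) ^ t *
            ∑ S ∈ (Finset.univ : Finset (Fin p)).powersetCard t,
              (∑ j ∈ S, (b j : ℚ)) * ∏ i ∈ Sᶜ, ((b i : ℚ) - 1) := by
      rw [Finset.mul_sum]
      have hper2 : ∀ S ∈ (Finset.univ : Finset (Fin p)).powersetCard t,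
          (r : ℚ) * (((pf.filter (fun C : Fin p → ℕ => r ∣ ∑ j ∈ S, C j)).card : ℚ) *
            (∑ j ∈ S, (b j : ℚ)))
          = (∏ i, ((b i : ℚ) - 1)) * (∑ j ∈ S, (b j : ℚ))
            + (((r : ℚ) - 1) * (-1) ^ t) *
              ((∑ j ∈ S, (b j : ℚ)) * ∏ i ∈ Sᶜ, ((b i : ℚ) - 1)) := by
        intro S hS
        have h := hNQ t S hS
        linear_combination (∑ j ∈ S, (b j : ℚ)) * h
      rw [Finset.sum_congr rfl hper2, Finset.sum_add_distrib, ← Finset.mul_sum,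
        ← Finset.mul_sum, bsum_id ht.1 (fun j => (b j : ℚ))]
    have hfac : (t.factorial : ℚ) = (t : ℚ) * ((t-1).factorial : ℚ) := by
      rw [← Nat.mul_factorial_pred (show t ≠ 0 by omega)]
      push_cast
      ring
    have hchoose : (((t-1).factorial : ℚ) * ((p-t).factorial : ℚ)) *
        (((p-1).choose (t-1) : ℕ) : ℚ) = ((p-1).factorial : ℚ) := by
      have h := Nat.choose_mul_factorial_mul_factorial (show t-1 ≤ p-1 by omega)
      rw [show p-1-(t-1) = p-t by omega] at h
      push_cast [← h]
      ring
    rw [Nat.cast_mul, hfac]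
    rw [show (1 / (t:ℚ)) * (((t:ℚ) * ((t-1).factorial : ℚ)) * ((p-t).factorial : ℚ) *
        (∑ S ∈ (Finset.univ : Finset (Fin p)).powersetCard t,
          ((pf.filter (fun C : Fin p → ℕ => r ∣ ∑ j ∈ S, C j)).card : ℚ) *
            (∑ j ∈ S, (b j : ℚ))))
      = (1 / (r:ℚ)) * ((((t-1).factorial : ℚ) * ((p-t).factorial : ℚ)) *
        ((r : ℚ) * ∑ S ∈ (Finset.univ : Finset (Fin p)).powersetCard t,
          ((pf.filter (fun C : Fin p → ℕ => r ∣ ∑ j ∈ S, C j)).card : ℚ) *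
            (∑ j ∈ S, (b j : ℚ)))) from by
          generalize (∑ S ∈ (Finset.univ : Finset (Fin p)).powersetCard t,
            ((pf.filter (fun C : Fin p → ℕ => r ∣ ∑ j ∈ S, C j)).card : ℚ) *
              (∑ j ∈ S, (b j : ℚ))) = X
          field_simp]
    rw [hAt]
    linear_combination (1/(r:ℚ)) * ((∏ i, ((b i : ℚ) - 1)) * (∑ i, (b i : ℚ))) * hchoose
  rw [Finset.sum_congr rfl hstep]
  -- sum the two pieces over t
  have hcard : (p + 1 - 1 : ℕ) = p := by omega
  have hsplit : (∑ t ∈ Finset.Icc 1 p, (1 / (r : ℚ)) *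
        ((((p-1).factorial : ℚ)) * ((∏ i, ((b i : ℚ) - 1)) * ∑ i, (b i : ℚ))
          + ((r : ℚ) - 1) * (((t-1).factorial : ℚ) * ((p-t).factorial : ℚ) * (-1) ^ t *
              ∑ S ∈ (Finset.univ : Finset (Fin p)).powersetCard t,
                (∑ j ∈ S, (b j : ℚ)) * ∏ i ∈ Sᶜ, ((b i : ℚ) - 1))))
      = (p : ℚ) * ((1 / (r : ℚ)) * ((((p-1).factorial : ℚ)) *
            ((∏ i, ((b i : ℚ) - 1)) * ∑ i, (b i : ℚ))))
        + ((1 / (r : ℚ)) * ((r : ℚ) - 1)) *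
            ((p.factorial : ℚ) * ((-1) ^ p - ∏ i, ((b i : ℚ) - 1))) := by
    rw [Finset.sum_congr rfl (fun t (_ : t ∈ Finset.Icc 1 p) => (by ring :
        (1 / (r : ℚ)) *
        ((((p-1).factorial : ℚ)) * ((∏ i, ((b i : ℚ) - 1)) * ∑ i, (b i : ℚ))
          + ((r : ℚ) - 1) * (((t-1).factorial : ℚ) * ((p-t).factorial : ℚ) * (-1) ^ t *
              ∑ S ∈ (Finset.univ : Finset (Fin p)).powersetCard t,
                (∑ j ∈ S, (b j : ℚ)) * ∏ i ∈ Sᶜ, ((b i : ℚ) - 1)))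
        = (1 / (r : ℚ)) * ((((p-1).factorial : ℚ)) *
            ((∏ i, ((b i : ℚ) - 1)) * ∑ i, (b i : ℚ)))
          + ((1 / (r : ℚ)) * ((r : ℚ) - 1)) *
            (((t-1).factorial : ℚ) * ((p-t).factorial : ℚ) * (-1) ^ t *
              ∑ S ∈ (Finset.univ : Finset (Fin p)).powersetCard t,
                (∑ j ∈ S, (b j : ℚ)) * ∏ i ∈ Sᶜ, ((b i : ℚ) - 1)))),
      Finset.sum_add_distrib, Finset.sum_const, ← Finset.mul_sum, telescope_id b,
      Nat.card_Icc, hcard, nsmul_eq_mul]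
  rw [hsplit]
  have hD2' : ((pf.filter (fun C : Fin p → ℕ => r ∣ ∑ i, C i)).card : ℚ)
      = ((∏ i, ((b i : ℚ) - 1)) - (-1) ^ p + (r : ℚ) * (-1) ^ p) / r := by
    rw [eq_div_iff hr0]
    linear_combination hD2
  rw [hD2']
  have hpfac : ((p.factorial : ℕ) : ℚ) = (p : ℚ) * (((p-1).factorial : ℕ) : ℚ) := by
    rw [← Nat.mul_factorial_pred (show p ≠ 0 by omega)]
    push_cast
    ring
  rw [hpfac]
  field_simp
  ring
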